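/- Let (y, x) and (y', x') be i.i.d. pairs with y = xᵀβ* + ε, y' = x'ᵀβ* + ε', where ε, ε' are i.i.d., independent of (x, x'), with E|ε| < ∞, E‖x‖ < ∞, and Σ = Cov(x − x') positive definite. Define ℒ_h(β) = E[L_h(y − y' − (x − x')ᵀβ)]. Then β* is a global minimizer of ℒ_h for every h > 0, i.e., ∇ℒ_h(β*) = 0 and ℒ_h is convex. -/

import Mathlib

open MeasureTheory Filter Real ProbabilityTheory
open scoped Topology RealInnerProductSpace

/-!
With `e = ε - ε'` and `A = x - x'`, the loss is `ℒ_h(β) = Φ(β - β*)` where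
`Φ(δ) = E[g(e - ⟪A, δ⟫)]` and `g = |·| ⋆ K_h` is convex, even and Lipschitz. So `Φ` is convex,
and it is even because `(A, e)` and `(A, -e)` have the same law; a convex even function is
minimal at `0`. For the gradient, `0 ≤ Φ(δ) - Φ(0) = (Φ(δ) + Φ(-δ) - 2Φ(0)) / 2`, and the
second difference of `g` at `a` with step `s` is at most `2|s|` times the `K_h`-mass of
`[a - |s|, a + |s|]`. That mass tends to `0` with the window, so by dominated convergence the
bound is `o(‖δ‖)`.
-/

theorem abs_add_add_abs_sub (c s : ℝ) : |c + s| + |c - s| = 2 * max |c| |s| := by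
  rcases abs_cases c with ⟨hc, _⟩ | ⟨hc, _⟩ <;> rcases abs_cases s with ⟨hs, _⟩ | ⟨hs, _⟩ <;>
    rw [hc, hs] <;>
    rcases abs_cases (c + s) with ⟨h1, _⟩ | ⟨h1, _⟩ <;>
    rcases abs_cases (c - s) with ⟨h2, _⟩ | ⟨h2, _⟩ <;>
    rw [h1, h2] <;> simp only [max_def] <;> split_ifs <;> linarith

/-- With `k = K(· / h) / h`, `convAbs k` is the paper's smoothed loss `L_h`. -/
noncomputable def convAbs (k : ℝ → ℝ) (r : ℝ) : ℝ := ∫ v, |r - v| * k v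

noncomputable def windowMass (k : ℝ → ℝ) (a t : ℝ) : ℝ := ∫ v in (a - t)..(a + t), k v

section Kernel

variable {k : ℝ → ℝ}

theorem continuous_windowMass (hk : Integrable k) :
    Continuous fun p : ℝ × ℝ => windowMass k p.1 p.2 := by
  have hprim := hk.continuous_primitive 0
  have hsplit : (fun p : ℝ × ℝ => windowMass k p.1 p.2) =
      fun p => (∫ v in (0 : ℝ)..(p.1 + p.2), k v) - ∫ v in (0 : ℝ)..(p.1 - p.2), k v := by
    funext p
    rw [windowMass, intervalIntegral.integral_interval_sub_left hk.intervalIntegrable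
      hk.intervalIntegrable]
  rw [hsplit]
  exact (hprim.comp (continuous_fst.add continuous_snd)).sub
    (hprim.comp (continuous_fst.sub continuous_snd))

theorem windowMass_zero (a : ℝ) : windowMass k a 0 = 0 := by
  simp [windowMass]

theorem norm_windowMass_le (hk : Integrable k) (a t : ℝ) :
    ‖windowMass k a t‖ ≤ ∫ v, ‖k v‖ :=
  intervalIntegral.norm_integral_le_integral_norm_uIoc.trans
    (setIntegral_le_integral hk.norm (ae_of_all _ fun _ => norm_nonneg _))

theorem norm_mul_windowMass_le (hk : Integrable k) (c a t : ℝ) :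
    ‖c * windowMass k a (c * t)‖ ≤ ‖c‖ * ∫ v, ‖k v‖ := by
  rw [norm_mul]
  exact mul_le_mul_of_nonneg_left (norm_windowMass_le hk _ _) (norm_nonneg _)

theorem integrable_abs_sub_mul (hk : Integrable k) (hk₁ : Integrable fun v => |v| * k v)
    (r : ℝ) : Integrable fun v => |r - v| * k v := by
  refine ((hk.norm.const_mul |r|).add hk₁.norm).mono'
    ((continuous_const.sub continuous_id).abs.aestronglyMeasurable.mul hk.1)
    (ae_of_all _ fun v => ?_)
  simp only [Pi.add_apply, norm_mul, Real.norm_eq_abs, abs_abs, ← add_mul]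
  exact mul_le_mul_of_nonneg_right (abs_sub _ _) (abs_nonneg _)

theorem lipschitzWith_convAbs (hk : Integrable k) (hk₁ : Integrable fun v => |v| * k v) :
    LipschitzWith (∫ v, ‖k v‖).toNNReal (convAbs k) := by
  refine LipschitzWith.of_dist_le_mul fun r₁ r₂ => ?_
  rw [Real.coe_toNNReal _ (integral_nonneg fun _ => norm_nonneg _), dist_eq_norm, convAbs,
    convAbs, ← integral_sub (integrable_abs_sub_mul hk hk₁ r₁) (integrable_abs_sub_mul hk hk₁ r₂),
    ← integral_mul_const]
  refine norm_integral_le_of_norm_le (hk.norm.mul_const _) (ae_of_all _ fun v => ?_)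
  rw [← sub_mul, norm_mul, Real.dist_eq, Real.norm_eq_abs, mul_comm]
  refine mul_le_mul_of_nonneg_left ?_ (norm_nonneg _)
  simpa using abs_abs_sub_abs_le_abs_sub (r₁ - v) (r₂ - v)

theorem convexOn_convAbs (hk₀ : ∀ v, 0 ≤ k v) (hk : Integrable k)
    (hk₁ : Integrable fun v => |v| * k v) : ConvexOn ℝ Set.univ (convAbs k) := by
  refine integral_convexOn_of_integrand_ae convex_univ (ae_of_all _ fun v => ?_)
    fun r _ => integrable_abs_sub_mul hk hk₁ r
  simpa [Real.dist_eq, mul_comm] using (convexOn_univ_dist v).smul (hk₀ v)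

theorem convAbs_neg (hk : ∀ v, k (-v) = k v) (r : ℝ) : convAbs k (-r) = convAbs k r := by
  rw [convAbs, ← integral_neg_eq_self]
  simp only [hk, neg_sub_neg, convAbs, abs_sub_comm]

theorem convAbs_add_add_convAbs_sub_le (hk₀ : ∀ v, 0 ≤ k v) (hk : Integrable k)
    (hk₁ : Integrable fun v => |v| * k v) {a s t : ℝ} (hst : |s| ≤ t) :
    convAbs k (a + s) + convAbs k (a - s) - 2 * convAbs k a ≤ 2 * t * windowMass k a t := by
  have hint := integrable_abs_sub_mul hk hk₁
  have ht : 0 ≤ t := (abs_nonneg s).trans hst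
  have hsecond : ∀ v, |a + s - v| * k v + |a - s - v| * k v - 2 * (|a - v| * k v)
      = 2 * (max |a - v| |s| - |a - v|) * k v := by
    intro v
    have h := abs_add_add_abs_sub (a - v) s
    rw [sub_add_eq_add_sub, sub_right_comm] at h
    linear_combination k v * h
  have hwindow : ∀ v, 2 * (max |a - v| |s| - |a - v|) * k v
      ≤ (Set.Icc (a - t) (a + t)).indicator (fun v => 2 * t * k v) v := by
    intro v
    by_cases hv : v ∈ Set.Icc (a - t) (a + t)
    · rw [Set.indicator_of_mem hv]
      have : max |a - v| |s| - |a - v| ≤ t :=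
        sub_le_iff_le_add'.mpr (max_le (by linarith) (by linarith [abs_nonneg (a - v)]))
      have := hk₀ v
      nlinarith
    · have hfar : t < |a - v| := by
        rw [Set.mem_Icc, not_and_or, not_le, not_le] at hv
        rcases hv with hv | hv
        · exact lt_abs.mpr (Or.inl (by linarith))
        · exact lt_abs.mpr (Or.inr (by linarith))
      rw [Set.indicator_of_notMem hv, max_eq_left (hst.trans hfar.le)]
      simp
  calc convAbs k (a + s) + convAbs k (a - s) - 2 * convAbs k a
      = ∫ v, 2 * (max |a - v| |s| - |a - v|) * k v := by
        have hsum : Integrable fun v => |a + s - v| * k v + |a - s - v| * k v :=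
          (hint _).add (hint _)
        simp only [convAbs]
        rw [← integral_const_mul, ← integral_add (hint _) (hint _),
          ← integral_sub hsum ((hint a).const_mul 2)]
        exact integral_congr_ae (ae_of_all _ hsecond)
    _ ≤ ∫ v, (Set.Icc (a - t) (a + t)).indicator (fun v => 2 * t * k v) v :=
        integral_mono ((((hint _).add (hint _)).sub ((hint a).const_mul 2)).congr
            (ae_of_all _ hsecond))
          ((hk.const_mul _).indicator measurableSet_Icc) hwindow
    _ = 2 * t * windowMass k a t := by
        rw [integral_indicator measurableSet_Icc, integral_const_mul,
          integral_Icc_eq_integral_Ioc, windowMass, intervalIntegral.integral_of_le (by linarith)]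

end Kernel

theorem MeasureTheory.Integrable.abs_mul_comp_div_div {K : ℝ → ℝ}
    (hK : Integrable fun t => |t| * K t) {h : ℝ} (hh : 0 < h) :
    Integrable fun v => |v| * (K (v / h) / h) := by
  refine (hK.comp_div hh.ne').congr (ae_of_all _ fun v => ?_)
  simp only [abs_div, abs_of_pos hh]
  ring

theorem ConvexOn.apply_zero_le_of_even {F : Type*} [AddCommGroup F] [Module ℝ F] {f : F → ℝ}
    (hf : ConvexOn ℝ Set.univ f) (heven : ∀ x, f (-x) = f x) (x : F) : f 0 ≤ f x := by
  have := hf.2 (Set.mem_univ x) (Set.mem_univ (-x)) (by norm_num : (0 : ℝ) ≤ 1 / 2)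
    (by norm_num : (0 : ℝ) ≤ 1 / 2) (by norm_num)
  simp only [smul_neg, add_neg_cancel, heven, smul_eq_mul] at this
  linarith

theorem hasFDerivAt_zero_of_sub_le {F : Type*} [NormedAddCommGroup F] [NormedSpace ℝ F]
    {f : F → ℝ} {x : F} {G : ℝ → ℝ} (hmin : ∀ δ, f x ≤ f (x + δ))
    (hle : ∀ δ, f (x + δ) - f x ≤ ‖δ‖ * G ‖δ‖) (hG : Tendsto G (𝓝 0) (𝓝 0)) :
    HasFDerivAt f (0 : F →L[ℝ] ℝ) x := by
  rw [hasFDerivAt_iff_isLittleO_nhds_zero, Asymptotics.isLittleO_iff]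
  intro c hc
  filter_upwards [(hG.comp tendsto_norm_zero).eventually (gt_mem_nhds hc)] with δ hδ
  rw [zero_apply, sub_zero, Real.norm_eq_abs,
    abs_of_nonneg (sub_nonneg.2 (hmin δ)), mul_comm c]
  exact (hle δ).trans (mul_le_mul_of_nonneg_left hδ.le (norm_nonneg δ))

theorem LipschitzWith.integrable_comp {Ω F G : Type*} [MeasurableSpace Ω] {μ : Measure Ω}
    [IsFiniteMeasure μ] [NormedAddCommGroup F] [NormedAddCommGroup G] {g : F → G} {C : NNReal}
    (hg : LipschitzWith C g) {f : Ω → F} (hf : Integrable f μ) :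
    Integrable (fun ω => g (f ω)) μ := by
  refine ((integrable_const ‖g 0‖).add (hf.norm.const_mul C)).mono'
    (hg.continuous.comp_aestronglyMeasurable hf.1) (ae_of_all _ fun ω => ?_)
  have hdist := hg.dist_le_mul (f ω) 0
  rw [dist_eq_norm, dist_eq_norm, sub_zero] at hdist
  have := norm_sub_norm_le (g (f ω)) (g 0)
  simp only [Pi.add_apply]
  linarith

theorem ConvexOn.comp_sub_inner {E : Type*} [NormedAddCommGroup E] [InnerProductSpace ℝ E]
    {g : ℝ → ℝ} (hg : ConvexOn ℝ Set.univ g) (c : ℝ) (a : E) :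
    ConvexOn ℝ Set.univ fun β => g (c - ⟪a, β⟫) :=
  hg.comp_affineMap
    (AffineMap.const ℝ E c - ((innerSL ℝ a : E →L[ℝ] ℝ) : E →ₗ[ℝ] ℝ).toAffineMap)

theorem IdentDistrib.prod_sub_neg {Ω α : Type*} [MeasurableSpace Ω] [MeasurableSpace α]
    {μ : Measure Ω} [IsFiniteMeasure μ] {X : Ω → α} {ε ε' : Ω → ℝ} (hX : AEMeasurable X μ)
    (hεε' : IndepFun ε ε' μ) (hid : IdentDistrib ε ε' μ μ)
    (hind : IndepFun X (fun ω => (ε ω, ε' ω)) μ) :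
    IdentDistrib (fun ω => (X ω, ε ω - ε' ω)) (fun ω => (X ω, -(ε ω - ε' ω))) μ μ := by
  simp only [neg_sub]
  exact ((IdentDistrib.refl hX).prodMk
    (hid.prodMk hid.symm hεε' hεε'.symm) hind (hind.comp measurable_id measurable_swap)).comp
    (measurable_fst.prodMk (measurable_snd.fst.sub measurable_snd.snd))

section Window

variable {Ω : Type*} [MeasurableSpace Ω] {μ : Measure Ω} {k : ℝ → ℝ}
  {e n : Ω → ℝ}

theorem integrable_mul_windowMass (hk : Integrable k) (he : AEStronglyMeasurable e μ)
    (hn : Integrable n μ) (t : ℝ) :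
    Integrable (fun ω => n ω * windowMass k (e ω) (n ω * t)) μ :=
  (hn.norm.mul_const _).mono'
    (hn.1.mul ((continuous_windowMass hk).comp_aestronglyMeasurable (he.prodMk (hn.1.mul_const t))))
    (ae_of_all _ fun ω => norm_mul_windowMass_le hk (n ω) (e ω) t)

theorem tendsto_integral_mul_windowMass (hk : Integrable k) (he : AEStronglyMeasurable e μ)
    (hn : Integrable n μ) :
    Tendsto (fun t => ∫ ω, n ω * windowMass k (e ω) (n ω * t) ∂μ) (𝓝 0) (𝓝 0) := by
  have hlim := tendsto_integral_filter_of_dominated_convergence (l := 𝓝 (0 : ℝ))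
    (F := fun t ω => n ω * windowMass k (e ω) (n ω * t))
    (f := fun ω => n ω * windowMass k (e ω) (n ω * 0)) (fun ω => ‖n ω‖ * ∫ v, ‖k v‖)
    (Eventually.of_forall fun t => (integrable_mul_windowMass hk he hn t).1)
    (Eventually.of_forall fun t => ae_of_all _ fun ω => norm_mul_windowMass_le hk (n ω) (e ω) t)
    (hn.norm.mul_const _)
    (ae_of_all _ fun ω => (continuous_const.mul ((continuous_windowMass hk).comp
      (continuous_const.prodMk (continuous_const.mul continuous_id)))).tendsto 0)
  simpa only [mul_zero, windowMass_zero, integral_zero] using hlim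

end Window

noncomputable def expectedLoss {Ω E : Type*} [MeasurableSpace Ω] [NormedAddCommGroup E]
    [InnerProductSpace ℝ E] (μ : Measure Ω) (g : ℝ → ℝ) (e : Ω → ℝ) (A : Ω → E) (β : E) : ℝ :=
  ∫ ω, g (e ω - ⟪A ω, β⟫) ∂μ

section ExpectedLoss

variable {Ω E : Type*} [MeasurableSpace Ω] {μ : Measure Ω} [NormedAddCommGroup E]
  [InnerProductSpace ℝ E] {e : Ω → ℝ} {A : Ω → E}

theorem convexOn_expectedLoss [IsFiniteMeasure μ] {g : ℝ → ℝ} {C : NNReal}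
    (hg : LipschitzWith C g) (hconv : ConvexOn ℝ Set.univ g) (he : Integrable e μ)
    (hA : Integrable A μ) : ConvexOn ℝ Set.univ (expectedLoss μ g e A) :=
  integral_convexOn_of_integrand_ae convex_univ
    (ae_of_all _ fun ω => hconv.comp_sub_inner (e ω) (A ω))
    fun β _ => hg.integrable_comp (he.sub (hA.inner_const β))

theorem expectedLoss_neg [MeasurableSpace E] [OpensMeasurableSpace E] {g : ℝ → ℝ}
    (hg : Continuous g) (heven : ∀ r, g (-r) = g r)
    (hsymm : IdentDistrib (fun ω => (A ω, e ω)) (fun ω => (A ω, -e ω)) μ μ) (β : E) :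
    expectedLoss μ g e A (-β) = expectedLoss μ g e A β := by
  have hφ : Measurable fun p : E × ℝ => g (p.2 - ⟪p.1, β⟫) :=
    (hg.comp (continuous_snd.sub (continuous_fst.inner continuous_const))).measurable
  calc expectedLoss μ g e A (-β) = ∫ ω, g (-e ω - ⟪A ω, β⟫) ∂μ := by
        refine integral_congr_ae (ae_of_all _ fun ω => ?_)
        simp only [← heven (-e ω - _), inner_neg_right, neg_sub, sub_neg_eq_add, add_comm]
    _ = expectedLoss μ g e A β := (hsymm.comp hφ).integral_eq.symm

variable {k : ℝ → ℝ}

theorem expectedLoss_convAbs_add_neg_le [IsFiniteMeasure μ] (hk₀ : ∀ v, 0 ≤ k v)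
    (hk : Integrable k) (hk₁ : Integrable fun v => |v| * k v) (he : Integrable e μ)
    (hA : Integrable A μ) (δ : E) :
    expectedLoss μ (convAbs k) e A δ + expectedLoss μ (convAbs k) e A (-δ)
        - 2 * expectedLoss μ (convAbs k) e A 0
      ≤ 2 * ‖δ‖ * ∫ ω, ‖A ω‖ * windowMass k (e ω) (‖A ω‖ * ‖δ‖) ∂μ := by
  have hint : ∀ β : E, Integrable (fun ω => convAbs k (e ω - ⟪A ω, β⟫)) μ := fun β =>
    (lipschitzWith_convAbs hk hk₁).integrable_comp (he.sub (hA.inner_const β))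
  simp only [expectedLoss]
  have hsum : Integrable (fun ω => convAbs k (e ω - ⟪A ω, δ⟫) + convAbs k (e ω - ⟪A ω, -δ⟫)) μ :=
    (hint δ).add (hint (-δ))
  rw [← integral_add (hint δ) (hint (-δ)), ← integral_const_mul,
    ← integral_sub hsum ((hint 0).const_mul 2), ← integral_const_mul]
  refine integral_mono (((hint δ).add (hint (-δ))).sub ((hint 0).const_mul 2))
    ((integrable_mul_windowMass hk he.1 hA.norm _).const_mul _) fun ω => ?_
  have := convAbs_add_add_convAbs_sub_le hk₀ hk hk₁ (a := e ω) (abs_real_inner_le_norm (A ω) δ)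
  simp only [inner_neg_right, inner_zero_right, sub_neg_eq_add, sub_zero]
  linarith

theorem expectedLoss_convAbs_zero_le [MeasurableSpace E] [OpensMeasurableSpace E]
    [IsFiniteMeasure μ] (hk₀ : ∀ v, 0 ≤ k v) (hk : Integrable k)
    (hk₁ : Integrable fun v => |v| * k v) (hkeven : ∀ v, k (-v) = k v) (he : Integrable e μ)
    (hA : Integrable A μ)
    (hsymm : IdentDistrib (fun ω => (A ω, e ω)) (fun ω => (A ω, -e ω)) μ μ) (β : E) :
    expectedLoss μ (convAbs k) e A 0 ≤ expectedLoss μ (convAbs k) e A β :=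
  (convexOn_expectedLoss (lipschitzWith_convAbs hk hk₁) (convexOn_convAbs hk₀ hk hk₁) he
    hA).apply_zero_le_of_even
    (expectedLoss_neg (lipschitzWith_convAbs hk hk₁).continuous (convAbs_neg hkeven) hsymm) β

theorem hasFDerivAt_expectedLoss_convAbs [MeasurableSpace E] [OpensMeasurableSpace E]
    [IsFiniteMeasure μ] (hk₀ : ∀ v, 0 ≤ k v) (hk : Integrable k)
    (hk₁ : Integrable fun v => |v| * k v) (hkeven : ∀ v, k (-v) = k v) (he : Integrable e μ)
    (hA : Integrable A μ)
    (hsymm : IdentDistrib (fun ω => (A ω, e ω)) (fun ω => (A ω, -e ω)) μ μ) :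
    HasFDerivAt (expectedLoss μ (convAbs k) e A) (0 : E →L[ℝ] ℝ) 0 := by
  refine hasFDerivAt_zero_of_sub_le (fun δ => ?_) (fun δ => ?_)
    (tendsto_integral_mul_windowMass hk he.1 hA.norm)
  · rw [zero_add]
    exact expectedLoss_convAbs_zero_le hk₀ hk hk₁ hkeven he hA hsymm δ
  · have := expectedLoss_convAbs_add_neg_le hk₀ hk hk₁ he hA δ
    rw [expectedLoss_neg (lipschitzWith_convAbs hk hk₁).continuous (convAbs_neg hkeven) hsymm]
      at this
    rw [zero_add]
    linarith

end ExpectedLoss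

theorem stmt7_general {Ω : Type*} [MeasurableSpace Ω] (μ : Measure Ω) [IsProbabilityMeasure μ]
    {p : ℕ} (x x' : Ω → EuclideanSpace ℝ (Fin p)) (ε ε' : Ω → ℝ)
    (βstar : EuclideanSpace ℝ (Fin p))
    (hxm : Measurable x) (hx'm : Measurable x')
    (hεindep : IndepFun ε ε' μ) (hεid : IdentDistrib ε ε' μ μ)
    (hindep : IndepFun (fun ω => (x ω, x' ω)) (fun ω => (ε ω, ε' ω)) μ)
    (hpairs : IdentDistrib (fun ω => (x ω, ε ω)) (fun ω => (x' ω, ε' ω)) μ μ)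
    (hεint : Integrable ε μ) (hxint : Integrable (fun ω => ‖x ω‖) μ)
    (K : ℝ → ℝ) (hK0 : ∀ t, 0 ≤ K t)
    (hsym : ∀ t, K (-t) = K t) (hIntK : Integrable K)
    (hKmom : Integrable (fun t => |t| * K t)) (h : ℝ) (hh : 0 < h)
    (y y' : Ω → ℝ)
    (hy : ∀ ω, y ω = ⟪x ω, βstar⟫ + ε ω)
    (hy' : ∀ ω, y' ω = ⟪x' ω, βstar⟫ + ε' ω)
    (L : EuclideanSpace ℝ (Fin p) → ℝ)
    (hL : ∀ β, L β = ∫ ω, (∫ v, |y ω - y' ω - ⟪x ω - x' ω, β⟫ - v| * (K (v / h) / h)) ∂μ) :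
    (∀ β, L βstar ≤ L β) ∧
    HasGradientAt L (0 : EuclideanSpace ℝ (Fin p)) βstar ∧
    ConvexOn ℝ Set.univ L := by
  set k : ℝ → ℝ := fun v => K (v / h) / h
  have hk₀ : ∀ v, 0 ≤ k v := fun v => div_nonneg (hK0 _) hh.le
  have hk : Integrable k := (hIntK.comp_div hh.ne').div_const h
  have hk₁ : Integrable fun v => |v| * k v := hKmom.abs_mul_comp_div_div hh
  have hkeven : ∀ v, k (-v) = k v := fun v => by simp only [k, neg_div, hsym]
  have hx' : Integrable x' μ := (integrable_norm_iff hx'm.aestronglyMeasurable).1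
    ((hpairs.comp measurable_fst.norm).integrable_iff.1 hxint)
  have hA : Integrable (fun ω => x ω - x' ω) μ :=
    ((integrable_norm_iff hxm.aestronglyMeasurable).1 hxint).sub hx'
  have he : Integrable (fun ω => ε ω - ε' ω) μ := hεint.sub (hεid.integrable_iff.1 hεint)
  have hsymm := IdentDistrib.prod_sub_neg (hxm.sub hx'm).aemeasurable hεindep hεid
    (hindep.comp (measurable_fst.sub measurable_snd) measurable_id)
  set Φ := expectedLoss μ (convAbs k) (fun ω => ε ω - ε' ω) (fun ω => x ω - x' ω)
  have hLΦ : L = fun β => Φ (β - βstar) := by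
    funext β
    refine (hL β).trans (integral_congr_ae (ae_of_all _ fun ω => ?_))
    have harg : y ω - y' ω - ⟪x ω - x' ω, β⟫ = ε ω - ε' ω - ⟪x ω - x' ω, β - βstar⟫ := by
      rw [hy, hy', inner_sub_right, inner_sub_left, inner_sub_left]
      ring
    simp only [harg]
    rfl
  refine ⟨fun β => ?_, ?_, ?_⟩
  · simp only [hLΦ, sub_self]
    exact expectedLoss_convAbs_zero_le hk₀ hk hk₁ hkeven he hA hsymm _
  · rw [hasGradientAt_iff_hasFDerivAt, map_zero, hLΦ, hasFDerivAt_comp_sub, sub_self]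
    exact hasFDerivAt_expectedLoss_convAbs hk₀ hk hk₁ hkeven he hA hsymm
  · rw [hLΦ]
    simpa [Function.comp_def, neg_add_eq_sub] using (convexOn_expectedLoss
      (lipschitzWith_convAbs hk hk₁) (convexOn_convAbs hk₀ hk hk₁) he hA).translate_right (-βstar)

/-- population unbiasedness of convoluted rank regression: `β*` is a global
minimizer of `ℒ_h(β) = E[L_h(y - y' - (x - x')ᵀβ)]`, the gradient vanishes at `β*`, and
`ℒ_h` is convex. -/
theorem stmt7 {Ω : Type*} [MeasurableSpace Ω] (μ : Measure Ω) [IsProbabilityMeasure μ]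
    {p : ℕ} (x x' : Ω → EuclideanSpace ℝ (Fin p)) (ε ε' : Ω → ℝ)
    (βstar : EuclideanSpace ℝ (Fin p))
    (hxm : Measurable x) (hx'm : Measurable x')
    (hεm : Measurable ε) (hε'm : Measurable ε')
    (hεindep : IndepFun ε ε' μ) (hεid : IdentDistrib ε ε' μ μ)
    (hindep : IndepFun (fun ω => (x ω, x' ω)) (fun ω => (ε ω, ε' ω)) μ)
    (hpairs : IdentDistrib (fun ω => (x ω, ε ω)) (fun ω => (x' ω, ε' ω)) μ μ)
    (hεint : Integrable ε μ) (hxint : Integrable (fun ω => ‖x ω‖) μ)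
    (hSigmaPD : ∀ v : EuclideanSpace ℝ (Fin p), v ≠ 0 →
      0 < ∫ ω, (⟪x ω - x' ω, v⟫)^2 ∂μ)
    (K : ℝ → ℝ) (hMeas : Measurable K) (hK0 : ∀ t, 0 ≤ K t)
    (hsym : ∀ t, K (-t) = K t) (hIntK : Integrable K) (hK1 : (∫ t, K t) = 1)
    (hKmom : Integrable (fun t => |t| * K t)) (h : ℝ) (hh : 0 < h)
    (y y' : Ω → ℝ)
    (hy : ∀ ω, y ω = ⟪x ω, βstar⟫ + ε ω)
    (hy' : ∀ ω, y' ω = ⟪x' ω, βstar⟫ + ε' ω)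
    (L : EuclideanSpace ℝ (Fin p) → ℝ)
    (hL : ∀ β, L β = ∫ ω, (∫ v, |y ω - y' ω - ⟪x ω - x' ω, β⟫ - v| * (K (v / h) / h)) ∂μ) :
    (∀ β, L βstar ≤ L β) ∧
    HasGradientAt L (0 : EuclideanSpace ℝ (Fin p)) βstar ∧
    ConvexOn ℝ Set.univ L :=
  stmt7_general μ x x' ε ε' βstar hxm hx'm hεindep hεid hindep hpairs hεint hxint K hK0 hsym hIntK
    hKmom h hh y y' hy hy' L hL
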